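/- arXiv:2206.09558 — 4 statements merged into one kernel-verified Lean document; each statement's English description precedes it below -/
import Mathlib

section
/- Let H be a connected k-uniform hypergraph with maximum degree Δ. Then the largest real root λ(H) of the matching polynomial μ(H,x) satisfies λ(H) ≥ Δ^{1/k}, with equality if and only if all edges of H share a common vertex. -/
open scoped Classical

structure FinHypergraph (α : Type*) [DecidableEq α] where
  verts : Finset α
  edges : Finset (Finset α)
  edge_sub : ∀ e ∈ edges, e ⊆ verts

namespace FinHypergraph

variable {α : Type*} [DecidableEq α] {β : Type*} [DecidableEq β]

/-- `H` is `k`-uniform: every edge has exactly `k` vertices. -/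
def IsUniform (H : FinHypergraph α) (k : ℕ) : Prop := ∀ e ∈ H.edges, e.card = k

/-- The degree of a vertex: the number of edges containing it. -/
def degree (H : FinHypergraph α) (v : α) : ℕ := (H.edges.filter (fun e => v ∈ e)).card

/-- `Δ` is the maximum degree of `H`. -/
def maxDegree (H : FinHypergraph α) (Δ : ℕ) : Prop :=
  (∀ v, H.degree v ≤ Δ) ∧ ∃ v ∈ H.verts, H.degree v = Δ

/-- Two vertices are adjacent if some edge contains both. -/
def Adj (H : FinHypergraph α) (a b : α) : Prop := ∃ e ∈ H.edges, a ∈ e ∧ b ∈ e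

/-- `H` is connected: nonempty and any two vertices joined by a walk. -/
def Connected (H : FinHypergraph α) : Prop :=
  H.verts.Nonempty ∧ ∀ a ∈ H.verts, ∀ b ∈ H.verts, Relation.ReflTransGen H.Adj a b

/-- A matching: a set of pairwise disjoint edges of `H`. -/
def IsMatching (H : FinHypergraph α) (M : Finset (Finset α)) : Prop :=
  M ⊆ H.edges ∧ ∀ e ∈ M, ∀ f ∈ M, e ≠ f → Disjoint e f

/-- `p(H, r)`: the number of matchings of size `r`. -/
noncomputable def matchCount (H : FinHypergraph α) (r : ℕ) : ℕ :=
  (H.edges.powerset.filter (fun M => M.card = r ∧ H.IsMatching M)).card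

/-- The matching polynomial `μ(H,x) = Σ_r (-1)^r p(H,r) x^{|V| - k r}`. -/
noncomputable def matchingPoly (H : FinHypergraph α) (k : ℕ) : Polynomial ℝ :=
  ∑ r ∈ Finset.range (H.edges.card + 1),
    Polynomial.C ((-1 : ℝ) ^ r * (H.matchCount r : ℝ)) * Polynomial.X ^ (H.verts.card - k * r)

/-- Deleting a set of vertices: induced sub-hypergraph on `verts \ W`. -/
def delete (H : FinHypergraph α) (W : Finset α) : FinHypergraph α where
  verts := H.verts \ W
  edges := H.edges.filter (fun e => Disjoint e W)
  edge_sub := by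
    intro e he
    simp only [Finset.mem_filter] at he
    exact Finset.subset_sdiff.mpr ⟨H.edge_sub e he.1, he.2⟩

/-- The set of moduli of the complex zeros of a real polynomial. -/
def rootModuli (p : Polynomial ℝ) : Set ℝ :=
  {m | ∃ z : ℂ, (Polynomial.aeval z) p = 0 ∧ ‖z‖ = m}

/-- `λ(H)`: the maximum modulus of the complex zeros of the matching polynomial. -/
noncomputable def lam (H : FinHypergraph α) (k : ℕ) : ℝ :=
  sSup (rootModuli (H.matchingPoly k))

end FinHypergraph

/-! Let `f_E(y) = Σ_M (-y)^{|M|}` (`matchingSum E y`), summed over the matchings `M` of an edge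
family `E`. For `x ≠ 0`, `μ(H,x) = x^{|V|} f_E(x^{-k})`, so every positive zero `y` of `f_E` yields the root `y^{-1/k}` of
`μ(H,x)`. Splitting off an edge `g` gives `f_E = f_{E-g} - y f_F`, where `F` consists of the edges
of `E - g` disjoint from `g`; by induction, positivity of `f_E` on `[0, c]` passes to every
subfamily. A star with `d` edges has `f = 1 - d y`. If `H` is not a star, connectivity provides an
edge `g` missing a vertex `u` of maximum degree `Δ` but meeting an edge through `u`; already on the
star at `u` together with `g` the function is negative at `1/Δ`, so `f_E` vanishes before `1/Δ`
and `λ(H) > Δ^{1/k}`. If `H` is a star, `μ(H,x) = x^{|V|} - Δ x^{|V|-k}` and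
`λ(H) = Δ^{1/k}`. -/

open Finset Polynomial FinHypergraph

theorem Continuous.nonneg_of_forall_Ico_pos {f : ℝ → ℝ} (hf : Continuous f) {a b : ℝ}
    (hab : a < b) (h : ∀ y ∈ Set.Ico a b, 0 < f y) : 0 ≤ f b := by
  have : closure (Set.Ico a b) ⊆ f ⁻¹' Set.Ici 0 :=
    closure_minimal (fun y hy => (h y hy).le) (isClosed_Ici.preimage hf)
  exact this (closure_Ico hab.ne ▸ Set.right_mem_Icc.2 hab.le)

theorem Continuous.exists_first_zero {f : ℝ → ℝ} (hf : Continuous f) (h0 : 0 < f 0) {c : ℝ}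
    (hc : ∃ y ∈ Set.Icc 0 c, f y ≤ 0) :
    ∃ y₀ ∈ Set.Ioc 0 c, f y₀ = 0 ∧ ∀ y ∈ Set.Ico 0 y₀, 0 < f y := by
  obtain ⟨y₀, ⟨hy₀c, hy₀f⟩, hleast⟩ :=
    (isCompact_Icc.inter_right (isClosed_Iic.preimage hf)).exists_isLeast hc
  have hy₀ : 0 < y₀ := hy₀c.1.lt_of_ne fun h => by simp [← h] at hy₀f; linarith
  have before : ∀ y ∈ Set.Ico 0 y₀, 0 < f y := fun y hy => not_le.1 fun hfy =>
    (hleast ⟨⟨hy.1, hy.2.le.trans hy₀c.2⟩, hfy⟩).not_gt hy.2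
  exact ⟨y₀, ⟨hy₀, hy₀c.2⟩,
    le_antisymm hy₀f (hf.nonneg_of_forall_Ico_pos hy₀ before), before⟩

namespace FinHypergraph

variable {α : Type*}

noncomputable def matchings (E : Finset (Finset α)) : Finset (Finset (Finset α)) :=
  E.powerset.filter fun M => (M : Set (Finset α)).PairwiseDisjoint id

noncomputable def matchingSum (E : Finset (Finset α)) (y : ℝ) : ℝ :=
  ∑ M ∈ matchings E, (-y) ^ #M

@[simp]
theorem mem_matchings {E M : Finset (Finset α)} :
    M ∈ matchings E ↔ M ⊆ E ∧ (M : Set (Finset α)).PairwiseDisjoint id := by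
  simp [matchings]

theorem matchingSum_zero (E : Finset (Finset α)) : matchingSum E 0 = 1 := by
  rw [matchingSum, sum_eq_single ∅ (fun M _ hM => by simp [hM]) (by simp)]
  simp

theorem matchingSum_empty (y : ℝ) : matchingSum (∅ : Finset (Finset α)) y = 1 := by
  simp [matchingSum, matchings, filter_singleton]

theorem continuous_matchingSum (E : Finset (Finset α)) : Continuous (matchingSum E) := by
  unfold matchingSum
  fun_prop

variable [DecidableEq α]

theorem matchingSum_eq_sub {E : Finset (Finset α)} {g : Finset α} (hg : g ∈ E) (y : ℝ) :
    matchingSum E y =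
      matchingSum (E.erase g) y - y * matchingSum ((E.erase g).filter (Disjoint · g)) y := by
  have avoiding : (matchings E).filter (g ∉ ·) = matchings (E.erase g) := by
    ext M
    simp [subset_erase, and_right_comm]
  have containing : ∑ M ∈ (matchings E).filter (g ∈ ·), (-y) ^ #M =
      -y * matchingSum ((E.erase g).filter (Disjoint · g)) y := by
    rw [matchingSum, mul_sum]
    refine sum_nbij' (·.erase g) (insert g) ?_ ?_ ?_ ?_ ?_
    · simp only [mem_filter, mem_matchings, and_imp]
      intro M hME hM hgM
      refine ⟨fun e he => ?_, hM.subset (by simp)⟩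
      obtain ⟨heg, heM⟩ := mem_erase.1 he
      exact mem_filter.2 ⟨erase_subset_erase g hME he, hM heM hgM heg⟩
    · simp only [mem_filter, mem_matchings, and_imp, mem_insert_self, and_true]
      intro N hN hNdisj
      refine ⟨insert_subset hg fun e he => mem_of_mem_erase (mem_filter.1 (hN he)).1, ?_⟩
      rw [coe_insert, Set.pairwiseDisjoint_insert]
      exact ⟨hNdisj, fun e he _ => (mem_filter.1 (hN he)).2.symm⟩
    · intro M hM
      exact insert_erase (mem_filter.1 hM).2
    · intro N hN
      exact erase_insert fun hgN =>
        (mem_erase.1 (mem_filter.1 ((mem_matchings.1 hN).1 hgN)).1).1 rfl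
    · intro M hM
      rw [← pow_succ', card_erase_add_one (mem_filter.1 hM).2]
  have split := sum_filter_add_sum_filter_not (matchings E) (g ∈ ·) fun M => (-y) ^ #M
  rw [containing, avoiding] at split
  rw [matchingSum, ← split]
  unfold matchingSum
  ring

theorem matchingSum_of_forall_mem {E : Finset (Finset α)} {v : α} (hv : ∀ e ∈ E, v ∈ e)
    (y : ℝ) :
    matchingSum E y = 1 - #E * y := by
  induction E using Finset.induction_on with
  | empty => simp [matchingSum_empty]
  | insert g E hgE ih =>
    have no_disjoint : (E.filter (Disjoint · g)) = ∅ :=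
      filter_false_of_mem fun e he =>
        not_disjoint_iff.2 ⟨v, hv e (mem_insert_of_mem he), hv g (mem_insert_self g E)⟩
    rw [matchingSum_eq_sub (mem_insert_self g E), erase_insert hgE, no_disjoint, matchingSum_empty,
      ih fun e he => hv e (mem_insert_of_mem he), card_insert_of_notMem hgE]
    push_cast
    ring

theorem matchingSum_pos_of_subset {E E' : Finset (Finset α)} (hE' : E' ⊆ E) {c : ℝ}
    (hE : ∀ y ∈ Set.Icc 0 c, 0 < matchingSum E y) :
    ∀ y ∈ Set.Icc 0 c, 0 < matchingSum E' y := by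
  induction E using Finset.strongInduction generalizing E' c with
  | H E ih =>
  obtain rfl | ⟨g, hgE, hgE'⟩ := (eq_or_ne E' E).imp_right fun hne =>
    exists_of_ssubset (hE'.ssubset_of_ne hne)
  · exact hE
  suffices h : ∀ y ∈ Set.Icc 0 c, 0 < matchingSum (E.erase g) y from
    ih _ (erase_ssubset hgE) (subset_erase.2 ⟨hE', hgE'⟩) h
  -- At the first zero `y₀` of `matchingSum (E.erase g)`, induction keeps the `F`-term
  -- nonnegative, so `matchingSum E y₀ = -y₀ * matchingSum F y₀ ≤ 0`.
  by_contra! hneg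
  obtain ⟨y₀, hy₀, hzero, hbefore⟩ := (continuous_matchingSum _).exists_first_zero
    (by simp [matchingSum_zero]) hneg
  have hF : 0 ≤ matchingSum ((E.erase g).filter (Disjoint · g)) y₀ :=
    (continuous_matchingSum _).nonneg_of_forall_Ico_pos hy₀.1 fun y hy =>
      ih _ (erase_ssubset hgE) (filter_subset _ _)
        (fun t ht => hbefore t ⟨ht.1, ht.2.trans_lt hy.2⟩) y ⟨hy.1, le_rfl⟩
  have := hE y₀ ⟨hy₀.1.le, hy₀.2⟩
  rw [matchingSum_eq_sub hgE, hzero] at this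
  nlinarith [hy₀.1]

theorem exists_matchingSum_eq_zero_lt_inv_card {E : Finset (Finset α)} {v : α} {e g : Finset α}
    (he : e ∈ E) (hve : v ∈ e) (hg : g ∈ E) (hvg : v ∉ g) (heg : ¬Disjoint e g) :
    ∃ y, 0 < y ∧ y < (#(E.filter (v ∈ ·)) : ℝ)⁻¹ ∧ matchingSum E y = 0 := by
  set S := E.filter (v ∈ ·)
  have hgS : g ∉ S := fun h => hvg (mem_filter.1 h).2
  have heS : e ∈ S := mem_filter.2 ⟨he, hve⟩
  have hd : 0 < (#S : ℝ) := by exact_mod_cast card_pos.2 ⟨e, heS⟩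
  have hd' : (#(S.filter (Disjoint · g)) : ℝ) < #S := by
    exact_mod_cast card_lt_card ⟨filter_subset _ _, fun h => heg (mem_filter.1 (h heS)).2⟩
  -- `matchingSum (insert g S) y = (1 - d y) - y (1 - d' y)` with `d' < d`.
  have hneg : matchingSum (insert g S) (#S : ℝ)⁻¹ < 0 := by
    rw [matchingSum_eq_sub (mem_insert_self g S), erase_insert hgS,
      matchingSum_of_forall_mem (fun e he => (mem_filter.1 he).2),
      matchingSum_of_forall_mem (v := v) fun e he => (mem_filter.1 (mem_filter.1 he).1).2,
      mul_inv_cancel₀ hd.ne', sub_self, zero_sub, neg_lt_zero]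
    refine mul_pos (inv_pos.2 hd) ?_
    rwa [sub_pos, ← div_eq_mul_inv, div_lt_one hd]
  obtain ⟨y₁, hy₁, hzero₁, -⟩ := (continuous_matchingSum _).exists_first_zero
    (by simp [matchingSum_zero]) ⟨_, ⟨by positivity, le_rfl⟩, hneg.le⟩
  have hy₁S : y₁ < (#S : ℝ)⁻¹ := hy₁.2.lt_of_ne (by rintro rfl; linarith)
  have : ∃ y ∈ Set.Icc 0 y₁, matchingSum E y ≤ 0 := by
    by_contra! hpos
    exact (matchingSum_pos_of_subset (insert_subset hg (filter_subset _ _)) hpos y₁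
      ⟨hy₁.1.le, le_rfl⟩).ne' hzero₁
  obtain ⟨y, hy, hzero, -⟩ := (continuous_matchingSum _).exists_first_zero
    (by simp [matchingSum_zero]) this
  exact ⟨y, hy.1, hy.2.trans_lt hy₁S, hzero⟩

theorem isMatching_iff {H : FinHypergraph α} {M : Finset (Finset α)} :
    H.IsMatching M ↔ M ⊆ H.edges ∧ (M : Set (Finset α)).PairwiseDisjoint id :=
  Iff.rfl

theorem matchingSum_edges (H : FinHypergraph α) (y : ℝ) :
    matchingSum H.edges y = ∑ r ∈ range (#H.edges + 1), (H.matchCount r : ℝ) * (-y) ^ r := by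
  have hcard : ∀ M ∈ matchings H.edges, #M ∈ range (#H.edges + 1) := fun M hM =>
    mem_range.2 (Nat.lt_succ_of_le (card_le_card (mem_matchings.1 hM).1))
  rw [matchingSum, ← sum_fiberwise_of_maps_to hcard]
  refine sum_congr rfl fun r _ => ?_
  have hfiber : (matchings H.edges).filter (#· = r) =
      H.edges.powerset.filter fun M => #M = r ∧ H.IsMatching M := by
    ext M
    simp only [mem_filter, mem_matchings, mem_powerset, isMatching_iff]
    tauto
  rw [sum_congr rfl fun M hM => by rw [(mem_filter.1 hM).2], sum_const, nsmul_eq_mul, matchCount,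
    hfiber]

theorem matchCount_zero (H : FinHypergraph α) : H.matchCount 0 = 1 := by
  rw [matchCount, card_eq_one]
  refine ⟨∅, eq_singleton_iff_unique_mem.2
    ⟨?_, fun M hM => card_eq_zero.1 (mem_filter.1 hM).2.1⟩⟩
  simp [isMatching_iff]

theorem IsUniform.le_card_verts {H : FinHypergraph α} {k : ℕ} (hu : H.IsUniform k)
    {e : Finset α} (he : e ∈ H.edges) : k ≤ #H.verts :=
  hu e he ▸ card_le_card (H.edge_sub e he)

theorem IsUniform.mul_le_card_verts {H : FinHypergraph α} {k r : ℕ} (hu : H.IsUniform k)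
    (hr : H.matchCount r ≠ 0) : k * r ≤ #H.verts := by
  obtain ⟨M, hM⟩ := card_ne_zero.1 hr
  simp only [mem_filter, mem_powerset, isMatching_iff] at hM
  obtain ⟨hME, rfl, -, hdisj⟩ := hM
  calc k * #M = #(M.biUnion id) := by
        rw [card_biUnion hdisj, sum_const_nat (f := fun e => #(id e)) fun e he => hu e (hME he),
          mul_comm]
    _ ≤ #H.verts := card_le_card (biUnion_subset.2 fun e he => H.edge_sub e (hME he))

theorem eval_matchingPoly {H : FinHypergraph α} {k : ℕ} (hu : H.IsUniform k) {x : ℝ}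
    (hx : x ≠ 0) :
    (H.matchingPoly k).eval x = x ^ #H.verts * matchingSum H.edges (x ^ k)⁻¹ := by
  rw [matchingSum_edges, mul_sum, matchingPoly, eval_finsetSum]
  refine sum_congr rfl fun r _ => ?_
  obtain h | h := eq_or_ne (H.matchCount r) 0
  · simp [h]
  · rw [eval_mul, eval_C, eval_pow, eval_X, pow_sub₀ x hx (hu.mul_le_card_verts h), pow_mul]
    ring

theorem coeff_matchingPoly_card_verts (H : FinHypergraph α) {k : ℕ} (hk : 0 < k)
    (hn : H.verts.Nonempty) : (H.matchingPoly k).coeff #H.verts = 1 := by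
  rw [matchingPoly, finsetSum_coeff, sum_eq_single 0]
  · simp [matchCount_zero]
  · intro r _ hr
    have : 0 < #H.verts := hn.card_pos
    have : 0 < k * r := Nat.mul_pos hk (Nat.pos_of_ne_zero hr)
    rw [coeff_C_mul_X_pow, if_neg (by omega)]
  · simp

theorem matchingPoly_ne_zero (H : FinHypergraph α) {k : ℕ} (hk : 0 < k) (hn : H.verts.Nonempty) :
    H.matchingPoly k ≠ 0 := fun h => by
  simpa [h] using H.coeff_matchingPoly_card_verts hk hn

theorem bddAbove_rootModuli {p : ℝ[X]} (hp : p ≠ 0) : BddAbove (rootModuli p) :=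
  ((p.aroots ℂ).toFinset.image (‖·‖)).bddAbove.mono fun _ ⟨z, hz, hm⟩ =>
    mem_image.2 ⟨z, Multiset.mem_toFinset.2 (mem_aroots.2 ⟨hp, hz⟩), hm⟩

theorem ofReal_mem_rootModuli {p : ℝ[X]} {x : ℝ} (hx : 0 ≤ x) (hroot : p.IsRoot x) :
    x ∈ rootModuli p :=
  ⟨x, by simpa [hroot.eq_zero] using aeval_ofReal (K := ℂ) p x, by simp [hx]⟩

theorem le_lam {H : FinHypergraph α} {k : ℕ} (hk : 0 < k) (hn : H.verts.Nonempty) {x : ℝ}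
    (hx : 0 ≤ x) (hroot : (H.matchingPoly k).IsRoot x) : x ≤ H.lam k :=
  le_csSup (bddAbove_rootModuli (H.matchingPoly_ne_zero hk hn)) (ofReal_mem_rootModuli hx hroot)

theorem matchingPoly_of_forall_mem {H : FinHypergraph α} {k : ℕ} (hu : H.IsUniform k) {v : α}
    (hv : ∀ e ∈ H.edges, v ∈ e) :
    H.matchingPoly k = X ^ #H.verts - C (#H.edges : ℝ) * X ^ (#H.verts - k) := by
  refine eq_of_infinite_eval_eq _ _ ((Set.finite_singleton 0).infinite_compl.mono fun x hx => ?_)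
  rw [Set.mem_ofPred_eq, eval_matchingPoly hu hx, matchingSum_of_forall_mem hv]
  obtain h | ⟨e, he⟩ := H.edges.eq_empty_or_nonempty
  · simp [h]
  · simp only [eval_sub, eval_mul, eval_C, eval_pow, eval_X]
    rw [pow_sub₀ x hx (hu.le_card_verts he)]
    ring

theorem isGreatest_rootModuli_X_pow_sub_C_mul_X_pow {n k : ℕ} (hk : 0 < k) (hn : 0 < n) {m : ℝ}
    (hm : 0 ≤ m) (hkn : k ≤ n ∨ m = 0) :
    IsGreatest (rootModuli (X ^ n - C m * X ^ (n - k))) (m ^ ((1 : ℝ) / k)) := by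
  set t := m ^ ((1 : ℝ) / k)
  have ht : 0 ≤ t := Real.rpow_nonneg hm _
  have htk : t ^ k = m := by
    simpa only [t, one_div] using Real.rpow_inv_natCast_pow hm hk.ne'
  refine ⟨ofReal_mem_rootModuli ht ?_, ?_⟩
  · rcases hkn with hkn | rfl
    · simp [← htk, ← pow_add, Nat.add_sub_cancel' hkn]
    · simp [t, hn.ne', hk.ne']
  · rintro _ ⟨z, hz, rfl⟩
    by_contra! hlt
    have hz0 : 0 < ‖z‖ := ht.trans_lt hlt
    have hnorm : ‖z‖ ^ n = m * ‖z‖ ^ (n - k) := by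
      simp only [map_sub, map_mul, map_pow, aeval_X, aeval_C, sub_eq_zero] at hz
      simp [← norm_pow, hz, abs_of_nonneg hm]
    rcases hkn with hkn | rfl
    · have hmk : m < ‖z‖ ^ k := htk ▸ pow_lt_pow_left₀ hlt ht hk.ne'
      have hsplit : ‖z‖ ^ n = ‖z‖ ^ (n - k) * ‖z‖ ^ k := by
        rw [← pow_add, Nat.sub_add_cancel hkn]
      have := pow_pos hz0 (n - k)
      nlinarith
    · simp [hz0.ne', hn.ne'] at hnorm

theorem lam_of_forall_mem {H : FinHypergraph α} {k : ℕ} (hu : H.IsUniform k) (hk : 0 < k)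
    (hn : H.verts.Nonempty) {v : α} (hv : ∀ e ∈ H.edges, v ∈ e) :
    H.lam k = (#H.edges : ℝ) ^ ((1 : ℝ) / k) := by
  rw [lam, matchingPoly_of_forall_mem hu hv]
  refine (isGreatest_rootModuli_X_pow_sub_C_mul_X_pow hk hn.card_pos (Nat.cast_nonneg _)
    ?_).csSup_eq
  obtain h | ⟨e, he⟩ := H.edges.eq_empty_or_nonempty
  · simp [h]
  · exact .inl (hu.le_card_verts he)

theorem maxDegree.eq_card_edges_of_forall_mem {H : FinHypergraph α} {Δ : ℕ}
    (hΔ : H.maxDegree Δ) {v : α} (hv : ∀ e ∈ H.edges, v ∈ e) : Δ = #H.edges := by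
  obtain ⟨u, -, rfl⟩ := hΔ.2
  refine le_antisymm (card_filter_le _ _) ?_
  simpa [degree, filter_true_of_mem hv] using hΔ.1 v

theorem Connected.exists_not_disjoint {H : FinHypergraph α} (hconn : H.Connected) {v : α}
    (hv : v ∈ H.verts) {g : Finset α} (hg : g ∈ H.edges) (hvg : v ∉ g) (hgne : g.Nonempty) :
    ∃ e ∈ H.edges, ∃ f ∈ H.edges, v ∈ e ∧ v ∉ f ∧ ¬Disjoint e f := by
  by_contra! hsep
  have reach : ∀ b, Relation.ReflTransGen H.Adj v b →
      b = v ∨ ∃ e ∈ H.edges, v ∈ e ∧ b ∈ e := by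
    intro b hb
    induction hb with
    | refl => exact .inl rfl
    | tail _ hab ih =>
      obtain ⟨f, hf, haf, hbf⟩ := hab
      by_cases hvf : v ∈ f
      · exact .inr ⟨f, hf, hvf, hbf⟩
      rcases ih with rfl | ⟨e, he, hve, hae⟩
      · exact absurd haf hvf
      · exact absurd (hsep e he f hf hve hvf) (not_disjoint_iff.2 ⟨_, hae, haf⟩)
  obtain ⟨b, hb⟩ := hgne
  rcases reach b (hconn.2 v hv b (H.edge_sub g hg hb)) with rfl | ⟨e, he, hve, hbe⟩
  · exact hvg hb
  · exact absurd (hsep e he g hg hve hvg) (not_disjoint_iff.2 ⟨b, hbe, hb⟩)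

theorem maxDegree_rpow_lt_lam {H : FinHypergraph α} {k Δ : ℕ} (hu : H.IsUniform k) (hk : 0 < k)
    (hconn : H.Connected) (hΔ : H.maxDegree Δ) (hstar : ¬∃ v, ∀ e ∈ H.edges, v ∈ e) :
    (Δ : ℝ) ^ ((1 : ℝ) / k) < H.lam k := by
  obtain ⟨u, hu_mem, rfl⟩ := hΔ.2
  push Not at hstar
  obtain ⟨g, hg, hug⟩ := hstar u
  obtain ⟨e, he, f, hf, hue, huf, hef⟩ :=
    hconn.exists_not_disjoint hu_mem hg hug (card_pos.1 ((hu g hg).symm ▸ hk))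
  obtain ⟨y, hy, hyu, hzero⟩ := exists_matchingSum_eq_zero_lt_inv_card he hue hf huf hef
  set x := y⁻¹ ^ ((1 : ℝ) / k)
  have hx : 0 < x := by positivity
  have hxk : (x ^ k)⁻¹ = y := by
    simp only [x, one_div]
    rw [Real.rpow_inv_natCast_pow (inv_nonneg.2 hy.le) hk.ne', inv_inv]
  calc (H.degree u : ℝ) ^ ((1 : ℝ) / k) < x :=
        Real.rpow_lt_rpow (Nat.cast_nonneg _) ((lt_inv_comm₀ (inv_pos.1 (hy.trans hyu)) hy).2 hyu)
          (by positivity)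
    _ ≤ H.lam k :=
        le_lam hk hconn.1 hx.le (by rw [IsRoot, eval_matchingPoly hu hx.ne', hxk, hzero, mul_zero])

end FinHypergraph

/-- For a connected `k`-graph `H` with maximum degree `Δ`, the largest (real) root
`λ(H)` of `μ(H,x)` satisfies `λ(H) ≥ Δ^{1/k}`, with equality iff all edges of `H`
share a common vertex. -/
theorem lam_ge_maxDegree_rpow {α : Type*} [DecidableEq α]
    (H : FinHypergraph α) (k Δ : ℕ) (hk : 2 ≤ k) (hH : H.IsUniform k)
    (hconn : H.Connected) (hΔ : H.maxDegree Δ) :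
    (Δ : ℝ) ^ ((1 : ℝ) / (k : ℝ)) ≤ H.lam k ∧
      (H.lam k = (Δ : ℝ) ^ ((1 : ℝ) / (k : ℝ)) ↔ ∃ v, ∀ e ∈ H.edges, v ∈ e) := by
  have hk0 : 0 < k := by omega
  by_cases hstar : ∃ v, ∀ e ∈ H.edges, v ∈ e
  · obtain ⟨v, hv⟩ := hstar
    rw [lam_of_forall_mem hH hk0 hconn.1 hv, ← hΔ.eq_card_edges_of_forall_mem hv]
    exact ⟨le_rfl, iff_of_true rfl ⟨v, hv⟩⟩
  · have hlt := maxDegree_rpow_lt_lam hH hk0 hconn hΔ hstar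
    exact ⟨hlt.le, iff_of_false hlt.ne' hstar⟩
end

section
/- Let H be a connected k-uniform hypergraph with maximum degree Δ ≥ 2. Then for all real x ≥ (k/(k−1))·((k−1)(Δ−1))^{1/k}, the matching polynomial satisfies μ(H,x) > 0. In particular, every real zero of μ(H,x) is strictly less than (k/(k−1))·((k−1)(Δ−1))^{1/k}. -/
open scoped Classical

structure Hypergraph' (α : Type*) [DecidableEq α] where
  verts : Finset α
  edges : Finset (Finset α)
  edge_sub : ∀ e ∈ edges, e ⊆ verts

namespace Hypergraph'

variable {α : Type*} [DecidableEq α] {β : Type*} [DecidableEq β]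

/-- `H` is `k`-uniform: every edge has exactly `k` vertices. -/
def IsUniform (H : Hypergraph' α) (k : ℕ) : Prop := ∀ e ∈ H.edges, e.card = k

/-- The degree of a vertex: the number of edges containing it. -/
def degree (H : Hypergraph' α) (v : α) : ℕ := (H.edges.filter (fun e => v ∈ e)).card

/-- `Δ` is the maximum degree of `H`. -/
def maxDegree (H : Hypergraph' α) (Δ : ℕ) : Prop :=
  (∀ v, H.degree v ≤ Δ) ∧ ∃ v ∈ H.verts, H.degree v = Δ

/-- Two vertices are adjacent if some edge contains both. -/
def Adj (H : Hypergraph' α) (a b : α) : Prop := ∃ e ∈ H.edges, a ∈ e ∧ b ∈ e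

/-- `H` is connected: nonempty and any two vertices joined by a walk. -/
def Connected (H : Hypergraph' α) : Prop :=
  H.verts.Nonempty ∧ ∀ a ∈ H.verts, ∀ b ∈ H.verts, Relation.ReflTransGen H.Adj a b

/-- A matching: a set of pairwise disjoint edges of `H`. -/
def IsMatching (H : Hypergraph' α) (M : Finset (Finset α)) : Prop :=
  M ⊆ H.edges ∧ ∀ e ∈ M, ∀ f ∈ M, e ≠ f → Disjoint e f

/-- `p(H, r)`: the number of matchings of size `r`. -/
noncomputable def matchCount (H : Hypergraph' α) (r : ℕ) : ℕ :=
  (H.edges.powerset.filter (fun M => M.card = r ∧ H.IsMatching M)).card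

/-- The matching polynomial `μ(H,x) = Σ_r (-1)^r p(H,r) x^{|V| - k r}`. -/
noncomputable def matchingPoly (H : Hypergraph' α) (k : ℕ) : Polynomial ℝ :=
  ∑ r ∈ Finset.range (H.edges.card + 1),
    Polynomial.C ((-1 : ℝ) ^ r * (H.matchCount r : ℝ)) * Polynomial.X ^ (H.verts.card - k * r)

/-- Deleting a set of vertices: induced sub-hypergraph on `verts \ W`. -/
def delete (H : Hypergraph' α) (W : Finset α) : Hypergraph' α where
  verts := H.verts \ W
  edges := H.edges.filter (fun e => Disjoint e W)
  edge_sub := by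
    intro e he
    simp only [Finset.mem_filter] at he
    exact Finset.subset_sdiff.mpr ⟨H.edge_sub e he.1, he.2⟩

/-- The set of moduli of the complex zeros of a real polynomial. -/
def rootModuli (p : Polynomial ℝ) : Set ℝ :=
  {m | ∃ z : ℂ, (Polynomial.aeval z) p = 0 ∧ ‖z‖ = m}

/-- `λ(H)`: the maximum modulus of the complex zeros of the matching polynomial. -/
noncomputable def lam (H : Hypergraph' α) (k : ℕ) : ℝ :=
  sSup (rootModuli (H.matchingPoly k))

end Hypergraph'

/-!
Induction on the number of vertices, proving together with `μ(H, x) > 0` the ratio bound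
`x μ(H - v, x) < β μ(H, x)` for every vertex `v` of degree `< Δ`, where `β = k/(k-1)`.
The vertex recurrence `μ(H) = x μ(H - v) - ∑_{e ∋ v} μ(H - e)` reduces both to comparing
`μ(H - e)` with `μ(H - v)`: deleting the vertices of `e` one at a time, starting with `v`,
each later vertex has lost the edge `e`, so its degree is below `Δ` and the ratio bound for the
smaller hypergraph gives `x^(k-1) μ(H - e) < β^(k-1) μ(H - v)`. The threshold on `x` is what
makes `Δ β^(k-1) ≤ x^k` and `(Δ - 1) β^k ≤ (β - 1) x^k`, the two inequalities closing the step.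
-/

open Finset Polynomial

lemma sum_lt_mul_of_forall_lt_mul {ι : Type*} {s : Finset ι} {t : ι → ℝ} {A c m : ℝ} (hA : 0 < A)
    (hm : 0 < m) (ht : ∀ i ∈ s, t i < c * m) (hc : #s * c ≤ A) : ∑ i ∈ s, t i < A * m := by
  rcases s.eq_empty_or_nonempty with rfl | hs
  · simpa using mul_pos hA hm
  calc ∑ i ∈ s, t i < ∑ _i ∈ s, c * m := sum_lt_sum_of_nonempty hs ht
    _ = #s * c * m := by rw [sum_const, nsmul_eq_mul, mul_assoc]
    _ ≤ A * m := mul_le_mul_of_nonneg_right hc hm.le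

lemma pow_mul_lt_pow_mul_of_forall_insert {α : Type*} [DecidableEq α] {f : Finset α → ℝ}
    {s e : Finset α} {x β : ℝ} (hx : 0 ≤ x) (hβ : 0 < β)
    (hstep : ∀ W, s ⊆ W → W ⊆ e → ∀ u ∈ e, u ∉ W → x * f (insert u W) < β * f W) (j : ℕ) :
    ∀ W, s ⊆ W → W ⊆ e → #(e \ W) = j + 1 → x ^ (j + 1) * f e < β ^ (j + 1) * f W := by
  induction j with
  | zero =>
    intro W hsW hWe hcard
    obtain ⟨u, hu⟩ := card_eq_one.1 hcard
    obtain ⟨hue, huW⟩ := mem_sdiff.1 (hu ▸ mem_singleton_self u)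
    have hinsert : insert u W = e := by rw [insert_eq, ← hu, union_comm, union_sdiff_of_subset hWe]
    simpa [hinsert] using hstep W hsW hWe u hue huW
  | succ j ih =>
    intro W hsW hWe hcard
    obtain ⟨u, hu⟩ : (e \ W).Nonempty := card_pos.1 (by omega)
    obtain ⟨hue, huW⟩ := mem_sdiff.1 hu
    have hcard' : #(e \ insert u W) = j + 1 := by
      rw [sdiff_insert, card_erase_of_mem hu, hcard, Nat.add_sub_cancel]
    calc x ^ (j + 2) * f e = x * (x ^ (j + 1) * f e) := by ring
      _ ≤ x * (β ^ (j + 1) * f (insert u W)) := mul_le_mul_of_nonneg_left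
          (ih _ (hsW.trans (subset_insert u W)) (insert_subset hue hWe) hcard').le hx
      _ = β ^ (j + 1) * (x * f (insert u W)) := by ring
      _ < β ^ (j + 1) * (β * f W) :=
          mul_lt_mul_of_pos_left (hstep W hsW hWe u hue huW) (pow_pos hβ _)
      _ = β ^ (j + 2) * f W := by ring

namespace Hypergraph'

variable {α : Type*} [DecidableEq α]

section Deletion

variable {H : Hypergraph' α}

lemma delete_delete (H : Hypergraph' α) (W W' : Finset α) :
    (H.delete W).delete W' = H.delete (W ∪ W') := by
  simp only [delete, _root_.sdiff_sdiff_left, sup_eq_union, filter_filter, disjoint_union_right]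

lemma IsUniform.delete {k : ℕ} (hH : H.IsUniform k) (W : Finset α) :
    (H.delete W).IsUniform k :=
  fun e he => hH e (mem_filter.1 he).1

lemma card_verts_delete {W : Finset α} (hW : W ⊆ H.verts) :
    #(H.delete W).verts = #H.verts - #W :=
  card_sdiff_of_subset hW

lemma card_verts_delete_lt {W : Finset α} {w : α} (hw : w ∈ H.verts) (hwW : w ∈ W) :
    #(H.delete W).verts < #H.verts :=
  card_lt_card <| (ssubset_iff_of_subset sdiff_subset).2 ⟨w, hw, fun h => (mem_sdiff.1 h).2 hwW⟩

lemma degree_delete_le (W : Finset α) (u : α) : (H.delete W).degree u ≤ H.degree u :=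
  card_le_card <| filter_subset_filter _ (filter_subset _ _)

lemma degree_delete_lt {W : Finset α} {e : Finset α} {u : α} (he : e ∈ H.edges) (hu : u ∈ e)
    (heW : ¬Disjoint e W) : (H.delete W).degree u < H.degree u := by
  refine card_lt_card <| (ssubset_iff_of_subset <| filter_subset_filter _ (filter_subset _ _)).2
    ⟨e, mem_filter.2 ⟨he, hu⟩, fun h => heW ?_⟩
  exact (mem_filter.1 (mem_filter.1 h).1).2

lemma notMem_edges_delete_self {e : Finset α} (he : e.Nonempty) : e ∉ (H.delete e).edges :=
  fun h => he.ne_empty (disjoint_self.1 (mem_filter.1 h).2)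

end Deletion

section Matchings

variable {H : Hypergraph' α}

noncomputable def matchings (H : Hypergraph' α) : Finset (Finset (Finset α)) :=
  {M ∈ H.edges.powerset | H.IsMatching M}

@[simp] lemma mem_matchings {M : Finset (Finset α)} : M ∈ H.matchings ↔ H.IsMatching M := by
  simp only [matchings, mem_filter, mem_powerset, and_iff_right_iff_imp]
  exact fun h => h.1

lemma IsMatching.card_mul_le {k : ℕ} (hH : H.IsUniform k) {M : Finset (Finset α)}
    (hM : H.IsMatching M) : k * #M ≤ #H.verts := by
  calc k * #M = ∑ e ∈ M, #e := by rw [sum_congr rfl fun e he => hH e (hM.1 he)]; simp [mul_comm]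
    _ = #(M.biUnion id) := (card_biUnion hM.2).symm
    _ ≤ #H.verts := card_le_card <| biUnion_subset.2 fun e he => H.edge_sub e (hM.1 he)

lemma matchingPoly_eq_sum_matchings (H : Hypergraph' α) (k : ℕ) :
    H.matchingPoly k = ∑ M ∈ H.matchings, (-1 : ℝ[X]) ^ #M * X ^ (#H.verts - k * #M) := by
  have hmaps : ∀ M ∈ H.matchings, #M ∈ range (#H.edges + 1) := fun M hM =>
    mem_range_succ_iff.2 (card_le_card (mem_matchings.1 hM).1)
  rw [← sum_fiberwise_of_maps_to hmaps, matchingPoly]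
  refine sum_congr rfl fun r _ => ?_
  have hcount : H.matchCount r = #{M ∈ H.matchings | #M = r} := by
    simp only [matchCount, matchings, filter_filter, and_comm]
  rw [sum_congr rfl fun M hM => by rw [(mem_filter.1 hM).2], sum_const, hcount, nsmul_eq_mul]
  simp only [map_mul, map_pow, map_neg, map_one, map_natCast]
  ring

lemma matchings_delete_singleton (v : α) :
    (H.delete {v}).matchings = {M ∈ H.matchings | ∀ e ∈ M, v ∉ e} := by
  ext M
  simp only [mem_filter, mem_matchings, IsMatching, delete, subset_iff, mem_filter,
    disjoint_singleton_right]
  constructor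
  · rintro ⟨hsub, hdisj⟩
    exact ⟨⟨fun e he => (hsub he).1, hdisj⟩, fun e he => (hsub he).2⟩
  · rintro ⟨⟨hsub, hdisj⟩, hv⟩
    exact ⟨fun e he => ⟨hsub he, hv e he⟩, hdisj⟩

lemma insert_mem_matchings {e : Finset α} (he : e ∈ H.edges) {M : Finset (Finset α)}
    (hM : M ∈ (H.delete e).matchings) : insert e M ∈ H.matchings := by
  obtain ⟨hsub, hdisj⟩ := mem_matchings.1 hM
  have hM_edges : ∀ f ∈ M, f ∈ H.edges ∧ Disjoint f e := fun f hf => mem_filter.1 (hsub hf)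
  refine mem_matchings.2 ⟨insert_subset he fun f hf => (hM_edges f hf).1, ?_⟩
  simp only [mem_insert]
  rintro f (rfl | hf) g (rfl | hg) hfg
  · exact absurd rfl hfg
  · exact (hM_edges g hg).2.symm
  · exact (hM_edges f hf).2
  · exact hdisj f hf g hg hfg

lemma erase_mem_matchings_delete {e : Finset α} {M : Finset (Finset α)} (hM : M ∈ H.matchings)
    (he : e ∈ M) : M.erase e ∈ (H.delete e).matchings := by
  obtain ⟨hsub, hdisj⟩ := mem_matchings.1 hM
  refine mem_matchings.2 ⟨fun f hf => ?_, fun f hf g hg => hdisj f (mem_of_mem_erase hf) g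
    (mem_of_mem_erase hg)⟩
  obtain ⟨hfe, hfM⟩ := mem_erase.1 hf
  exact mem_filter.2 ⟨hsub hfM, hdisj f hfM e he hfe⟩

lemma sum_matchings_mem_edge {k : ℕ} (hH : H.IsUniform k) {e : Finset α} (he : e ∈ H.edges)
    (hne : e.Nonempty) :
    ∑ M ∈ H.matchings with e ∈ M, (-1 : ℝ[X]) ^ #M * X ^ (#H.verts - k * #M) =
      -(H.delete e).matchingPoly k := by
  rw [matchingPoly_eq_sum_matchings, ← sum_neg_distrib]
  refine sum_nbij' (fun M => M.erase e) (insert e) (fun M hM => ?_) (fun M hM => ?_)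
    (fun M hM => insert_erase (mem_filter.1 hM).2)
    (fun M hM => erase_insert fun h => notMem_edges_delete_self hne ((mem_matchings.1 hM).1 h))
    (fun M hM => ?_)
  · exact erase_mem_matchings_delete (mem_filter.1 hM).1 (mem_filter.1 hM).2
  · exact mem_filter.2 ⟨insert_mem_matchings he hM, mem_insert_self e M⟩
  · have hcard : #M = #(M.erase e) + 1 := (card_erase_add_one (mem_filter.1 hM).2).symm
    rw [card_verts_delete (H.edge_sub e he), hH e he, hcard, mul_add_one, Nat.sub_add_eq,
      Nat.sub_right_comm, pow_succ]
    ring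

lemma filter_matchings_not_forall_eq_biUnion (v : α) :
    {M ∈ H.matchings | ¬∀ e ∈ M, v ∉ e} =
      {e ∈ H.edges | v ∈ e}.biUnion fun e => {M ∈ H.matchings | e ∈ M} := by
  ext M
  simp only [mem_filter, mem_biUnion, not_forall, not_not, exists_prop]
  constructor
  · rintro ⟨hM, e, heM, hve⟩
    exact ⟨e, ⟨(mem_matchings.1 hM).1 heM, hve⟩, hM, heM⟩
  · rintro ⟨e, ⟨-, hve⟩, hM, heM⟩
    exact ⟨hM, e, heM, hve⟩

lemma pairwiseDisjoint_filter_matchings_mem (v : α) :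
    (({e ∈ H.edges | v ∈ e} : Finset (Finset α)) : Set (Finset α)).PairwiseDisjoint
      fun e => {M ∈ H.matchings | e ∈ M} := by
  intro e he f hf hef
  simp only [coe_filter, Set.mem_ofPred_eq] at he hf
  refine disjoint_left.2 fun M hMe hMf => ?_
  obtain ⟨hM, heM⟩ := mem_filter.1 hMe
  exact disjoint_left.1 ((mem_matchings.1 hM).2 e heM f (mem_filter.1 hMf).2 hef) he.2 hf.2

theorem matchingPoly_eq_X_mul_sub_sum {k : ℕ} (hH : H.IsUniform k) {v : α} (hv : v ∈ H.verts) :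
    H.matchingPoly k =
      X * (H.delete {v}).matchingPoly k -
        ∑ e ∈ H.edges with v ∈ e, (H.delete e).matchingPoly k := by
  rw [matchingPoly_eq_sum_matchings H, ← sum_filter_add_sum_filter_not _ (fun M => ∀ e ∈ M, v ∉ e),
    ← matchings_delete_singleton, filter_matchings_not_forall_eq_biUnion,
    sum_biUnion (pairwiseDisjoint_filter_matchings_mem v), sub_eq_add_neg, ← sum_neg_distrib]
  congr 1
  · rw [matchingPoly_eq_sum_matchings, mul_sum]
    refine sum_congr rfl fun M hM => ?_
    have hle := (mem_matchings.1 hM).card_mul_le (hH.delete {v})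
    rw [card_verts_delete (singleton_subset_iff.2 hv), card_singleton] at hle ⊢
    have hn : 0 < #H.verts := card_pos.2 ⟨v, hv⟩
    rw [show #H.verts - k * #M = #H.verts - 1 - k * #M + 1 by omega, pow_succ]
    ring
  · exact sum_congr rfl fun e he =>
      sum_matchings_mem_edge hH (mem_filter.1 he).1 ⟨v, (mem_filter.1 he).2⟩

lemma matchingPoly_of_verts_eq_empty {k : ℕ} (hk : k ≠ 0) (hH : H.IsUniform k)
    (hV : H.verts = ∅) : H.matchingPoly k = 1 := by
  have hE : H.edges = ∅ := eq_empty_of_forall_notMem fun e he => hk <| by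
    have he_empty : e ⊆ ∅ := hV ▸ H.edge_sub e he
    rw [← hH e he, subset_empty.1 he_empty, card_empty]
  have hM : H.matchings = {∅} := by
    rw [matchings, hE, powerset_empty, filter_singleton, if_pos ⟨empty_subset _, by simp⟩]
  simp [matchingPoly_eq_sum_matchings, hM, hV]

end Matchings

section Bounds

variable {H : Hypergraph' α} {k Δ : ℕ} {x β : ℝ}

lemma pow_mul_eval_matchingPoly (hk : k ≠ 0) (hH : H.IsUniform k) {v : α} (hv : v ∈ H.verts) :
    x ^ (k - 1) * (H.matchingPoly k).eval x =
      x ^ k * ((H.delete {v}).matchingPoly k).eval x -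
        ∑ e ∈ H.edges with v ∈ e, x ^ (k - 1) * ((H.delete e).matchingPoly k).eval x := by
  rw [matchingPoly_eq_X_mul_sub_sum hH hv, eval_sub, eval_mul, eval_X, eval_finsetSum, mul_sub,
    mul_sum, ← mul_assoc, ← pow_succ, Nat.sub_add_cancel (Nat.one_le_iff_ne_zero.2 hk)]

lemma pow_mul_eval_delete_edge_lt (hk : 2 ≤ k) (hH : H.IsUniform k) (hx : 0 ≤ x) (hβ : 0 < β)
    (hdeg : ∀ u, H.degree u ≤ Δ) {v : α} {e : Finset α} (he : e ∈ H.edges) (hve : v ∈ e)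
    (hratio : ∀ W ⊆ e, v ∈ W → ∀ u ∈ (H.delete W).verts, (H.delete W).degree u < Δ →
      x * (((H.delete W).delete {u}).matchingPoly k).eval x <
        β * ((H.delete W).matchingPoly k).eval x) :
    x ^ (k - 1) * ((H.delete e).matchingPoly k).eval x <
      β ^ (k - 1) * ((H.delete {v}).matchingPoly k).eval x := by
  obtain ⟨j, hj⟩ : ∃ j, k - 1 = j + 1 := ⟨k - 2, by omega⟩
  rw [hj]
  refine pow_mul_lt_pow_mul_of_forall_insert (f := fun W => ((H.delete W).matchingPoly k).eval x)
    hx hβ (fun W hvW hWe u hue huW => ?_) j {v} subset_rfl (singleton_subset_iff.2 hve) ?_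
  · have hvW' := singleton_subset_iff.1 hvW
    have hu := hratio W hWe hvW' u (mem_sdiff.2 ⟨H.edge_sub e he hue, huW⟩)
      ((degree_delete_lt he hue (not_disjoint_iff.2 ⟨v, hve, hvW'⟩)).trans_le (hdeg u))
    rwa [delete_delete, union_comm, ← insert_eq] at hu
  · rw [sdiff_singleton_eq_erase, card_erase_of_mem hve, hH e he, hj]

lemma eval_matchingPoly_pos_of_forall_edge (hk : k ≠ 0) (hH : H.IsUniform k) (hx : 0 < x)
    (hβ : 0 ≤ β) (h1 : (Δ : ℝ) * β ^ (k - 1) ≤ x ^ k) {v : α} (hv : v ∈ H.verts)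
    (hdeg : H.degree v ≤ Δ)
    (hpos : 0 < ((H.delete {v}).matchingPoly k).eval x)
    (hedge : ∀ e ∈ H.edges, v ∈ e → x ^ (k - 1) * ((H.delete e).matchingPoly k).eval x <
      β ^ (k - 1) * ((H.delete {v}).matchingPoly k).eval x) :
    0 < (H.matchingPoly k).eval x := by
  have hdeg_real : (#{e ∈ H.edges | v ∈ e} : ℝ) ≤ Δ := by exact_mod_cast hdeg
  refine pos_of_mul_pos_right (a := x ^ (k - 1)) ?_ (pow_pos hx _).le
  rw [pow_mul_eval_matchingPoly hk hH hv, sub_pos]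
  exact sum_lt_mul_of_forall_lt_mul (pow_pos hx k) hpos
    (fun e he => hedge e (mem_filter.1 he).1 (mem_filter.1 he).2)
    ((mul_le_mul_of_nonneg_right hdeg_real (by positivity)).trans h1)

lemma mul_eval_delete_lt_of_forall_edge (hk : k ≠ 0) (hH : H.IsUniform k) (hx : 0 < x)
    (hβ : 1 < β) (h2 : ((Δ : ℝ) - 1) * β ^ k ≤ (β - 1) * x ^ k) {v : α} (hv : v ∈ H.verts)
    (hdeg : H.degree v < Δ) (hpos : 0 < ((H.delete {v}).matchingPoly k).eval x)
    (hedge : ∀ e ∈ H.edges, v ∈ e → x ^ (k - 1) * ((H.delete e).matchingPoly k).eval x <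
      β ^ (k - 1) * ((H.delete {v}).matchingPoly k).eval x) :
    x * ((H.delete {v}).matchingPoly k).eval x < β * (H.matchingPoly k).eval x := by
  have hdeg_real : (#{e ∈ H.edges | v ∈ e} : ℝ) ≤ Δ - 1 := by
    have : #{e ∈ H.edges | v ∈ e} + 1 ≤ Δ := hdeg
    rw [le_sub_iff_add_le]; exact_mod_cast this
  have hβk : β * β ^ (k - 1) = β ^ k := by rw [← pow_succ', Nat.sub_add_cancel (by omega)]
  have hsum : β * ∑ e ∈ H.edges with v ∈ e, x ^ (k - 1) * ((H.delete e).matchingPoly k).eval x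
      < (β - 1) * x ^ k * ((H.delete {v}).matchingPoly k).eval x := by
    rw [mul_sum]
    refine sum_lt_mul_of_forall_lt_mul (by nlinarith [pow_pos hx k]) hpos (fun e he => ?_)
      ((mul_le_mul_of_nonneg_right hdeg_real (by positivity)).trans h2)
    rw [← hβk, mul_assoc]
    exact mul_lt_mul_of_pos_left (hedge e (mem_filter.1 he).1 (mem_filter.1 he).2) (by linarith)
  refine sub_pos.1 (pos_of_mul_pos_right (a := x ^ (k - 1)) ?_ (pow_pos hx _).le)
  rw [mul_sub, mul_left_comm, pow_mul_eval_matchingPoly hk hH hv, ← mul_assoc, ← pow_succ,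
    Nat.sub_add_cancel (by omega)]
  linarith

theorem eval_matchingPoly_pos_and_mul_eval_delete_lt (hk : 2 ≤ k) (hβ : 1 < β) (hx : 0 < x)
    (h1 : (Δ : ℝ) * β ^ (k - 1) ≤ x ^ k) (h2 : ((Δ : ℝ) - 1) * β ^ k ≤ (β - 1) * x ^ k)
    (H : Hypergraph' α) (hH : H.IsUniform k) (hdeg : ∀ u, H.degree u ≤ Δ) :
    0 < (H.matchingPoly k).eval x ∧
      ∀ v ∈ H.verts, H.degree v < Δ →
        x * ((H.delete {v}).matchingPoly k).eval x < β * (H.matchingPoly k).eval x := by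
  induction hn : #H.verts using Nat.strong_induction_on generalizing H with
  | _ n ih =>
  subst hn
  rcases H.verts.eq_empty_or_nonempty with hV | ⟨v₀, hv₀⟩
  · rw [matchingPoly_of_verts_eq_empty (by omega) hH hV]
    simp [hV]
  have ih_delete : ∀ W, ∀ w ∈ W, w ∈ H.verts →
      0 < ((H.delete W).matchingPoly k).eval x ∧
        ∀ u ∈ (H.delete W).verts, (H.delete W).degree u < Δ →
          x * (((H.delete W).delete {u}).matchingPoly k).eval x <
            β * ((H.delete W).matchingPoly k).eval x :=
    fun W w hwW hw => ih _ (card_verts_delete_lt hw hwW) _ (hH.delete W)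
      (fun u => (degree_delete_le W u).trans (hdeg u)) rfl
  have hpos : ∀ v ∈ H.verts, 0 < ((H.delete {v}).matchingPoly k).eval x :=
    fun v hv => (ih_delete {v} v (mem_singleton_self v) hv).1
  have hedge : ∀ v ∈ H.verts, ∀ e ∈ H.edges, v ∈ e →
      x ^ (k - 1) * ((H.delete e).matchingPoly k).eval x <
        β ^ (k - 1) * ((H.delete {v}).matchingPoly k).eval x :=
    fun v hv e he hve => pow_mul_eval_delete_edge_lt hk hH hx.le (by linarith) hdeg he hve
      fun W _ hvW => (ih_delete W v hvW hv).2
  exact ⟨eval_matchingPoly_pos_of_forall_edge (by omega) hH hx (by linarith) h1 hv₀ (hdeg v₀)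
      (hpos v₀ hv₀) (hedge v₀ hv₀),
    fun v hv hdv => mul_eval_delete_lt_of_forall_edge (by omega) hH hx hβ h2 hv hdv (hpos v hv)
      (hedge v hv)⟩

end Bounds

end Hypergraph'

lemma pos_and_pow_bounds_of_threshold_le {k Δ : ℕ} (hk : 2 ≤ k) (hΔ : 2 ≤ Δ) {x : ℝ}
    (hx : (k : ℝ) / ((k : ℝ) - 1) * (((k : ℝ) - 1) * ((Δ : ℝ) - 1)) ^ ((1 : ℝ) / (k : ℝ)) ≤ x) :
    0 < x ∧ (Δ : ℝ) * ((k : ℝ) / ((k : ℝ) - 1)) ^ (k - 1) ≤ x ^ k ∧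
      ((Δ : ℝ) - 1) * ((k : ℝ) / ((k : ℝ) - 1)) ^ k ≤ ((k : ℝ) / ((k : ℝ) - 1) - 1) * x ^ k := by
  have hkR : (2 : ℝ) ≤ k := by exact_mod_cast hk
  have hΔR : (2 : ℝ) ≤ Δ := by exact_mod_cast hΔ
  set β : ℝ := (k : ℝ) / ((k : ℝ) - 1)
  set c : ℝ := (((k : ℝ) - 1) * ((Δ : ℝ) - 1)) ^ ((1 : ℝ) / (k : ℝ)) with hc_def
  have hβ : β * ((k : ℝ) - 1) = k := div_mul_cancel₀ _ (by linarith)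
  have hβ_pos : 0 < β := div_pos (by linarith) (by linarith)
  have hc_pos : 0 < c := Real.rpow_pos_of_pos (by nlinarith) _
  have hck : c ^ k = ((k : ℝ) - 1) * ((Δ : ℝ) - 1) := by
    rw [hc_def, one_div, Real.rpow_inv_natCast_pow (by nlinarith) (by omega)]
  have hpow : (β * c) ^ k ≤ x ^ k := pow_le_pow_left₀ (by positivity) hx k
  have hβk : β ^ k = β ^ (k - 1) * β := by rw [← pow_succ, Nat.sub_add_cancel (by omega)]
  rw [mul_pow, hck] at hpow
  refine ⟨lt_of_lt_of_le (by positivity) hx, ?_, ?_⟩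
  · have hΔk : (Δ : ℝ) ≤ k * ((Δ : ℝ) - 1) := by nlinarith
    calc (Δ : ℝ) * β ^ (k - 1) ≤ k * ((Δ : ℝ) - 1) * β ^ (k - 1) :=
          mul_le_mul_of_nonneg_right hΔk (by positivity)
      _ = β ^ k * (((k : ℝ) - 1) * ((Δ : ℝ) - 1)) := by
          linear_combination (-((k : ℝ) - 1) * ((Δ : ℝ) - 1)) * hβk +
            (-((Δ : ℝ) - 1) * β ^ (k - 1)) * hβ
      _ ≤ x ^ k := hpow
  · have hβ1 : (β - 1) * ((k : ℝ) - 1) = 1 := by linear_combination hβ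
    calc ((Δ : ℝ) - 1) * β ^ k = (β - 1) * (β ^ k * (((k : ℝ) - 1) * ((Δ : ℝ) - 1))) := by
          linear_combination (-(((Δ : ℝ) - 1) * β ^ k)) * hβ1
      _ ≤ (β - 1) * x ^ k := mul_le_mul_of_nonneg_left hpow (by nlinarith)

theorem matchingPoly_pos_of_large_general {α : Type*} [DecidableEq α]
    (H : Hypergraph' α) (k Δ : ℕ) (hk : 2 ≤ k) (hH : H.IsUniform k)
    (hΔ : H.maxDegree Δ) (hΔ2 : 2 ≤ Δ) :
    (∀ x : ℝ, (k : ℝ) / ((k : ℝ) - 1) *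
        (((k : ℝ) - 1) * ((Δ : ℝ) - 1)) ^ ((1 : ℝ) / (k : ℝ)) ≤ x →
      0 < (H.matchingPoly k).eval x) ∧
    ∀ x : ℝ, (H.matchingPoly k).eval x = 0 →
      x < (k : ℝ) / ((k : ℝ) - 1) *
        (((k : ℝ) - 1) * ((Δ : ℝ) - 1)) ^ ((1 : ℝ) / (k : ℝ)) := by
  have hβ : 1 < (k : ℝ) / ((k : ℝ) - 1) := by
    have hkR : (2 : ℝ) ≤ k := by exact_mod_cast hk
    rw [one_lt_div (by linarith)]
    linarith
  have hpos : ∀ x : ℝ, (k : ℝ) / ((k : ℝ) - 1) *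
      (((k : ℝ) - 1) * ((Δ : ℝ) - 1)) ^ ((1 : ℝ) / (k : ℝ)) ≤ x →
        0 < (H.matchingPoly k).eval x := by
    intro x hx
    obtain ⟨hx0, h1, h2⟩ := pos_and_pow_bounds_of_threshold_le hk hΔ2 hx
    exact (Hypergraph'.eval_matchingPoly_pos_and_mul_eval_delete_lt hk hβ hx0 h1 h2 H hH hΔ.1).1
  exact ⟨hpos, fun x hx => lt_of_not_ge fun hle => (hpos x hle).ne' hx⟩

/-- For a connected `k`-graph with maximum degree `Δ ≥ 2`, the matching polynomial is
positive for all real `x ≥ (k/(k−1))·((k−1)(Δ−1))^{1/k}`; in particular every real zero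
is strictly below this bound. -/
theorem matchingPoly_pos_of_large {α : Type*} [DecidableEq α]
    (H : Hypergraph' α) (k Δ : ℕ) (hk : 2 ≤ k) (hH : H.IsUniform k)
    (hconn : H.Connected) (hΔ : H.maxDegree Δ) (hΔ2 : 2 ≤ Δ) :
    (∀ x : ℝ, (k : ℝ) / ((k : ℝ) - 1) *
        (((k : ℝ) - 1) * ((Δ : ℝ) - 1)) ^ ((1 : ℝ) / (k : ℝ)) ≤ x →
      0 < (H.matchingPoly k).eval x) ∧
    ∀ x : ℝ, (H.matchingPoly k).eval x = 0 →
      x < (k : ℝ) / ((k : ℝ) - 1) *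
        (((k : ℝ) - 1) * ((Δ : ℝ) - 1)) ^ ((1 : ℝ) / (k : ℝ)) :=
  matchingPoly_pos_of_large_general H k Δ hk hH hΔ hΔ2
end

section
/- Let H be a connected k-uniform hypergraph with maximum degree ≥ 2. If the matching polynomial μ(H,x) is ℓ-symmetric (i.e., μ(H,x) = x^t g(x^ℓ) for some t ≥ 0 and polynomial g), then ℓ divides k. Consequently the cyclic index of μ(H,x) — the largest ℓ for which μ(H,x) is ℓ-symmetric — equals k. -/
open scoped Classical

structure FinsetHypergraph (α : Type*) [DecidableEq α] where
  verts : Finset α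
  edges : Finset (Finset α)
  edge_sub : ∀ e ∈ edges, e ⊆ verts

namespace FinsetHypergraph

variable {α : Type*} [DecidableEq α] {β : Type*} [DecidableEq β]

/-- `H` is `k`-uniform: every edge has exactly `k` vertices. -/
def IsUniform (H : FinsetHypergraph α) (k : ℕ) : Prop := ∀ e ∈ H.edges, e.card = k

/-- The degree of a vertex: the number of edges containing it. -/
def degree (H : FinsetHypergraph α) (v : α) : ℕ := (H.edges.filter (fun e => v ∈ e)).card

/-- `Δ` is the maximum degree of `H`. -/
def maxDegree (H : FinsetHypergraph α) (Δ : ℕ) : Prop :=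
  (∀ v, H.degree v ≤ Δ) ∧ ∃ v ∈ H.verts, H.degree v = Δ

/-- Two vertices are adjacent if some edge contains both. -/
def Adj (H : FinsetHypergraph α) (a b : α) : Prop := ∃ e ∈ H.edges, a ∈ e ∧ b ∈ e

/-- `H` is connected: nonempty and any two vertices joined by a walk. -/
def Connected (H : FinsetHypergraph α) : Prop :=
  H.verts.Nonempty ∧ ∀ a ∈ H.verts, ∀ b ∈ H.verts, Relation.ReflTransGen H.Adj a b

/-- A matching: a set of pairwise disjoint edges of `H`. -/
def IsMatching (H : FinsetHypergraph α) (M : Finset (Finset α)) : Prop :=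
  M ⊆ H.edges ∧ ∀ e ∈ M, ∀ f ∈ M, e ≠ f → Disjoint e f

/-- `p(H, r)`: the number of matchings of size `r`. -/
noncomputable def matchCount (H : FinsetHypergraph α) (r : ℕ) : ℕ :=
  (H.edges.powerset.filter (fun M => M.card = r ∧ H.IsMatching M)).card

/-- The matching polynomial `μ(H,x) = Σ_r (-1)^r p(H,r) x^{|V| - k r}`. -/
noncomputable def matchingPoly (H : FinsetHypergraph α) (k : ℕ) : Polynomial ℝ :=
  ∑ r ∈ Finset.range (H.edges.card + 1),
    Polynomial.C ((-1 : ℝ) ^ r * (H.matchCount r : ℝ)) * Polynomial.X ^ (H.verts.card - k * r)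

/-- Deleting a set of vertices: induced sub-hypergraph on `verts \ W`. -/
def delete (H : FinsetHypergraph α) (W : Finset α) : FinsetHypergraph α where
  verts := H.verts \ W
  edges := H.edges.filter (fun e => Disjoint e W)
  edge_sub := by
    intro e he
    simp only [Finset.mem_filter] at he
    exact Finset.subset_sdiff.mpr ⟨H.edge_sub e he.1, he.2⟩

/-- The set of moduli of the complex zeros of a real polynomial. -/
def rootModuli (p : Polynomial ℝ) : Set ℝ :=
  {m | ∃ z : ℂ, (Polynomial.aeval z) p = 0 ∧ ‖z‖ = m}

/-- `λ(H)`: the maximum modulus of the complex zeros of the matching polynomial. -/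
noncomputable def lam (H : FinsetHypergraph α) (k : ℕ) : ℝ :=
  sSup (rootModuli (H.matchingPoly k))

end FinsetHypergraph


/-!
A `k`-uniform hypergraph with at least one edge has the nonzero coefficients `1` at `x^n` and
`-|E|` at `x^(n-k)`, where `n = |V|`. In `x^t g(x^ℓ)` every nonzero coefficient sits at an
exponent `≡ t (mod ℓ)`, so `ℓ ∣ n - (n - k) = k`. Conversely every exponent `n - k r` of `μ(H,x)`
is `≡ n (mod k)` (terms with `k r > n` vanish), so `μ(H,x) = x^(n mod k) g(x^k)`.
-/

namespace Polynomial

variable {R : Type*} [CommSemiring R]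

lemma le_and_dvd_sub_of_coeff_X_pow_mul_comp_ne_zero {t ℓ m : ℕ} (hℓ : 0 < ℓ) {g : R[X]}
    (h : (X ^ t * g.comp (X ^ ℓ)).coeff m ≠ 0) : t ≤ m ∧ ℓ ∣ m - t := by
  rw [← expand_eq_comp_X_pow, coeff_X_pow_mul'] at h
  by_cases htm : t ≤ m
  · rw [if_pos htm, coeff_expand hℓ] at h
    exact ⟨htm, of_not_not fun hdvd => h (if_neg hdvd)⟩
  · exact absurd (if_neg htm) h

lemma dvd_sub_of_coeff_ne_zero_of_eq_X_pow_mul_comp {p g : R[X]} {t ℓ a b : ℕ} (hℓ : 0 < ℓ)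
    (hp : p = X ^ t * g.comp (X ^ ℓ)) (ha : p.coeff a ≠ 0) (hb : p.coeff b ≠ 0) :
    ℓ ∣ a - b := by
  subst hp
  obtain ⟨hta, hℓa⟩ := le_and_dvd_sub_of_coeff_X_pow_mul_comp_ne_zero hℓ ha
  obtain ⟨htb, hℓb⟩ := le_and_dvd_sub_of_coeff_X_pow_mul_comp_ne_zero hℓ hb
  have hab : a - t - (b - t) = a - b := by omega
  exact hab ▸ Nat.dvd_sub hℓa hℓb

lemma X_pow_sub_mul_eq_X_pow_mod_mul_comp {k n r : ℕ} (hk : 0 < k) (hr : k * r ≤ n) :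
    (X : R[X]) ^ (n - k * r) = X ^ (n % k) * (X ^ (n / k - r)).comp (X ^ k) := by
  have hrk : k * r ≤ k * (n / k) := Nat.mul_le_mul_left k ((Nat.le_div_iff_mul_le hk).mpr
    (by rwa [mul_comm]))
  have hexp : n - k * r = n % k + k * (n / k - r) := by
    have := Nat.div_add_mod n k
    rw [Nat.mul_sub]
    omega
  rw [X_pow_comp, ← pow_mul, ← pow_add, hexp]

end Polynomial

namespace FinsetHypergraph

open Polynomial

variable {α : Type*} [DecidableEq α] {H : FinsetHypergraph α} {k : ℕ}

lemma le_card_verts_of_mem_edges (hH : H.IsUniform k) {e : Finset α} (he : e ∈ H.edges) :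
    k ≤ H.verts.card :=
  hH e he ▸ Finset.card_le_card (H.edge_sub e he)

lemma edges_nonempty_of_maxDegree {Δ : ℕ} (hΔ : H.maxDegree Δ) (hΔ0 : 0 < Δ) :
    H.edges.Nonempty := by
  obtain ⟨v, -, hv⟩ := hΔ.2
  rw [degree] at hv
  exact (Finset.card_pos.mp (hv ▸ hΔ0)).mono (Finset.filter_subset _ _)

lemma matchCount_eq_zero_of_card_verts_lt (hH : H.IsUniform k) {r : ℕ}
    (h : H.verts.card < k * r) : H.matchCount r = 0 := by
  rw [matchCount, Finset.card_eq_zero, Finset.filter_eq_empty_iff]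
  rintro M - ⟨hcard, hsub, hdisj⟩
  have hcover : (M.biUnion id).card = k * r := by
    have hsum : (M.biUnion id).card = ∑ e ∈ M, e.card := Finset.card_biUnion hdisj
    rw [hsum, Finset.sum_congr rfl fun e he => hH e (hsub he)]
    simp [hcard, mul_comm]
  have hcover_sub : M.biUnion id ⊆ H.verts :=
    Finset.biUnion_subset.mpr fun e he => H.edge_sub e (hsub he)
  have := Finset.card_le_card hcover_sub
  omega

lemma matchCount_zero (H : FinsetHypergraph α) : H.matchCount 0 = 1 := by
  rw [matchCount, Finset.card_eq_one]
  refine ⟨∅, Finset.eq_singleton_iff_unique_mem.mpr ⟨?_, fun M hM => ?_⟩⟩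
  · simp [IsMatching]
  · exact Finset.card_eq_zero.mp (Finset.mem_filter.mp hM).2.1

lemma matchCount_one_pos {e : Finset α} (he : e ∈ H.edges) : 0 < H.matchCount 1 := by
  rw [matchCount, Finset.card_pos]
  refine ⟨{e}, Finset.mem_filter.mpr ⟨by simpa, by simp, by simpa, ?_⟩⟩
  simp only [Finset.mem_singleton]
  rintro a rfl b rfl hab
  exact absurd rfl hab

lemma coeff_matchingPoly_sub_mul (hH : H.IsUniform k) (hk : 0 < k) {r : ℕ}
    (hr : k * r ≤ H.verts.card) (hrE : r ≤ H.edges.card) :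
    (H.matchingPoly k).coeff (H.verts.card - k * r) = (-1) ^ r * H.matchCount r := by
  simp only [matchingPoly, finsetSum_coeff, coeff_C_mul, coeff_X_pow]
  rw [Finset.sum_eq_single_of_mem r (Finset.mem_range.mpr (by omega)) fun s _ hsr => ?_]
  · simp
  by_cases hs : k * s ≤ H.verts.card
  · have hne : k * r ≠ k * s := fun h => hsr (Nat.eq_of_mul_eq_mul_left hk h).symm
    rw [if_neg (by omega)]
    simp
  · simp [matchCount_eq_zero_of_card_verts_lt hH (not_le.mp hs)]

lemma exists_matchingPoly_eq_X_pow_mul_comp (hH : H.IsUniform k) (hk : 0 < k) :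
    ∃ (t : ℕ) (g : ℝ[X]), H.matchingPoly k = X ^ t * g.comp (X ^ k) := by
  refine ⟨H.verts.card % k, ∑ r ∈ Finset.range (H.edges.card + 1),
    C ((-1 : ℝ) ^ r * H.matchCount r) * X ^ (H.verts.card / k - r), ?_⟩
  simp only [matchingPoly, sum_comp, mul_comp, C_comp, Finset.mul_sum]
  refine Finset.sum_congr rfl fun r _ => ?_
  by_cases hr : k * r ≤ H.verts.card
  · rw [X_pow_sub_mul_eq_X_pow_mod_mul_comp hk hr]
    ring
  · simp [matchCount_eq_zero_of_card_verts_lt hH (not_le.mp hr)]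

end FinsetHypergraph

open FinsetHypergraph in
theorem cyclic_index_eq_k_general {α : Type*} [DecidableEq α]
    (H : FinsetHypergraph α) (k Δ : ℕ) (hk : 2 ≤ k) (hH : H.IsUniform k)
    (hΔ : H.maxDegree Δ) (hΔ2 : 2 ≤ Δ) :
    (∀ ℓ : ℕ, 0 < ℓ →
        (∃ (t : ℕ) (g : Polynomial ℝ),
          H.matchingPoly k = Polynomial.X ^ t * g.comp (Polynomial.X ^ ℓ)) → ℓ ∣ k) ∧
      ∃ (t : ℕ) (g : Polynomial ℝ),
        H.matchingPoly k = Polynomial.X ^ t * g.comp (Polynomial.X ^ k) := by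
  have hk0 : 0 < k := by omega
  refine ⟨fun ℓ hℓ ⟨t, g, hsymm⟩ => ?_, exists_matchingPoly_eq_X_pow_mul_comp hH hk0⟩
  obtain ⟨e, he⟩ := edges_nonempty_of_maxDegree hΔ (by omega)
  have hkn := le_card_verts_of_mem_edges hH he
  have hE : 1 ≤ H.edges.card := Finset.card_pos.mpr ⟨e, he⟩
  have hlead : (H.matchingPoly k).coeff H.verts.card = 1 := by
    simpa [matchCount_zero] using
      coeff_matchingPoly_sub_mul hH hk0 (r := 0) (by simp) (Nat.zero_le _)
  have hnext : (H.matchingPoly k).coeff (H.verts.card - k) = -H.matchCount 1 := by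
    simpa using coeff_matchingPoly_sub_mul hH hk0 (r := 1) (by simpa) hE
  have hdiff : H.verts.card - (H.verts.card - k) = k := by omega
  exact hdiff ▸ Polynomial.dvd_sub_of_coeff_ne_zero_of_eq_X_pow_mul_comp hℓ hsymm
    (by simp [hlead]) (by simp [hnext, (matchCount_one_pos he).ne'])

/-- For a connected `k`-graph with maximum degree `≥ 2`: if `μ(H,x)` is `ℓ`-symmetric
(`μ(H,x) = x^t g(x^ℓ)`), then `ℓ ∣ k`; moreover `μ(H,x)` is `k`-symmetric, so the
cyclic index of `μ(H,x)` equals `k`. -/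
theorem cyclic_index_eq_k {α : Type*} [DecidableEq α]
    (H : FinsetHypergraph α) (k Δ : ℕ) (hk : 2 ≤ k) (hH : H.IsUniform k)
    (hconn : H.Connected) (hΔ : H.maxDegree Δ) (hΔ2 : 2 ≤ Δ) :
    (∀ ℓ : ℕ, 0 < ℓ →
        (∃ (t : ℕ) (g : Polynomial ℝ),
          H.matchingPoly k = Polynomial.X ^ t * g.comp (Polynomial.X ^ ℓ)) → ℓ ∣ k) ∧
      ∃ (t : ℕ) (g : Polynomial ℝ),
        H.matchingPoly k = Polynomial.X ^ t * g.comp (Polynomial.X ^ k) :=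
  cyclic_index_eq_k_general H k Δ hk hH hΔ hΔ2
end

section
/- Let H be a connected k-uniform hypergraph with maximum degree Δ ≥ 2 and k ≥ 3. Then μ(H,x) has at least one nonreal complex zero. -/
open scoped Classical

/-! With `n = |V(H)|`, only the powers `x ^ (n - k r)` occur in `μ(H, x)`, so
`μ(H, ζ x) = ζ ^ n μ(H, x)` for every `k`-th root of unity `ζ`. An edge makes both `x ^ n` and
`x ^ (n - k)` occur, so `μ(H, x)` is not a monomial and has a zero `z ≠ 0`. For `k ≥ 3` there is
a nonreal `k`-th root of unity `ζ`, and then `z` or `ζ z` is a nonreal zero. -/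

open Polynomial

theorem Polynomial.aeval_mul_eq_pow_mul_aeval {R A : Type*} [CommSemiring R] [CommSemiring A]
    [Algebra R A] {p : R[X]} {ζ : A} {n : ℕ} (hp : ∀ i ∈ p.support, ζ ^ i = ζ ^ n) (w : A) :
    aeval (ζ * w) p = ζ ^ n * aeval w p := by
  simp only [aeval_def, eval₂_eq_sum, Polynomial.sum_def, Finset.mul_sum, mul_pow]
  refine Finset.sum_congr rfl fun i hi => ?_
  rw [hp i hi]
  ring

theorem Polynomial.exists_isRoot_ne_zero_of_coeff_ne_zero {K : Type*} [Field K] [IsAlgClosed K]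
    {p : K[X]} {i j : ℕ} (hij : i ≠ j) (hi : p.coeff i ≠ 0) (hj : p.coeff j ≠ 0) :
    ∃ z, p.IsRoot z ∧ z ≠ 0 := by
  by_contra! h
  have hroots : p.roots = Multiset.replicate p.natDegree 0 := by
    rw [Multiset.eq_replicate, IsAlgClosed.card_roots_eq_natDegree]
    exact ⟨rfl, fun z hz => h z (isRoot_of_mem_roots hz)⟩
  have hmono : p = C p.leadingCoeff * X ^ p.natDegree := by
    conv_lhs => rw [← C_leadingCoeff_mul_prod_multiset_X_sub_C
      (IsAlgClosed.card_roots_eq_natDegree (p := p))]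
    simp [hroots]
  have hsupp : ∀ m, p.coeff m ≠ 0 → m = p.natDegree := fun m hm => by
    rw [hmono, coeff_C_mul_X_pow] at hm
    exact not_not.mp fun hne => hm (if_neg hne)
  exact hij ((hsupp i hi).trans (hsupp j hj).symm)

theorem Complex.im_ne_zero_or_mul_im_ne_zero {ζ z : ℂ} (hζ : ζ.im ≠ 0) (hz : z ≠ 0) :
    z.im ≠ 0 ∨ (ζ * z).im ≠ 0 := by
  rw [or_iff_not_imp_left, not_not]
  intro him
  have hre : z.re ≠ 0 := fun hre => hz (Complex.ext hre him)
  rw [Complex.mul_im, him, mul_zero, zero_add]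
  exact mul_ne_zero hζ hre

theorem Complex.exists_pow_eq_one_im_ne_zero {k : ℕ} (hk : 3 ≤ k) :
    ∃ ζ : ℂ, ζ ^ k = 1 ∧ ζ.im ≠ 0 := by
  have hζ := Complex.isPrimitiveRoot_exp k (by omega)
  refine ⟨_, hζ.pow_eq_one, fun him => ?_⟩
  set ζ := Complex.exp (2 * Real.pi * Complex.I / k)
  have hnormSq : ζ.re * ζ.re + ζ.im * ζ.im = 1 := by
    rw [← Complex.normSq_apply, ← Complex.sq_norm, hζ.norm'_eq_one (by omega), one_pow]
  -- a real root of unity is `±1`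
  have hsq : ζ ^ 2 = 1 := by
    rw [him, mul_zero, add_zero] at hnormSq
    apply Complex.ext <;> simp [sq, him, hnormSq]
  have := Nat.le_of_dvd two_pos ((hζ.pow_eq_one_iff_dvd 2).mp hsq)
  omega

namespace FinHypergraph

variable {α : Type*} [DecidableEq α] (H : FinHypergraph α)

theorem edges_nonempty_of_degree_ne_zero {v : α} (hv : H.degree v ≠ 0) : H.edges.Nonempty := by
  obtain ⟨e, he⟩ := Finset.card_ne_zero.mp hv
  exact ⟨e, (Finset.mem_filter.mp he).1⟩

theorem matchCount_zero_s19 : H.matchCount 0 = 1 := by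
  rw [matchCount, Finset.card_eq_one]
  refine ⟨∅, Finset.eq_singleton_iff_unique_mem.mpr ⟨?_, fun M hM => ?_⟩⟩
  · simp [IsMatching]
  · exact Finset.card_eq_zero.mp (Finset.mem_filter.mp hM).2.1

theorem matchCount_one_ne_zero (hedges : H.edges.Nonempty) : H.matchCount 1 ≠ 0 := by
  obtain ⟨e, he⟩ := hedges
  exact Finset.card_ne_zero.mpr ⟨{e}, Finset.mem_filter.mpr
    ⟨by simpa using he, Finset.card_singleton e, by simpa using he, by simp⟩⟩

theorem mul_le_card_verts_of_matchCount_ne_zero {k r : ℕ} (hH : H.IsUniform k)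
    (hr : H.matchCount r ≠ 0) : k * r ≤ H.verts.card := by
  obtain ⟨M, hM⟩ := Finset.card_ne_zero.mp hr
  obtain ⟨-, hMcard, hMsub, hMdisj⟩ := by simpa only [Finset.mem_filter] using hM
  calc k * r = ∑ e ∈ M, e.card := by
        rw [Finset.sum_congr rfl fun e he => hH e (hMsub he), Finset.sum_const, hMcard,
          smul_eq_mul, mul_comm]
    _ = (M.biUnion id).card := (Finset.card_biUnion hMdisj).symm
    _ ≤ H.verts.card := Finset.card_le_card <| Finset.biUnion_subset.mpr fun e he =>
        H.edge_sub e (hMsub he)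

theorem coeff_matchingPoly (k i : ℕ) :
    (H.matchingPoly k).coeff i = ∑ r ∈ Finset.range (H.edges.card + 1),
      if i = H.verts.card - k * r then (-1) ^ r * (H.matchCount r : ℝ) else 0 := by
  simp only [matchingPoly, finsetSum_coeff, coeff_C_mul_X_pow]

theorem coeff_matchingPoly_card_sub_mul {k r : ℕ} (hH : H.IsUniform k) (hk : 0 < k)
    (hr : r ≤ H.edges.card) (hkr : k * r ≤ H.verts.card) :
    (H.matchingPoly k).coeff (H.verts.card - k * r) = (-1) ^ r * (H.matchCount r : ℝ) := by
  rw [coeff_matchingPoly, Finset.sum_eq_single r]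
  · rw [if_pos rfl]
  · intro s _ hsr
    by_cases hs : H.matchCount s = 0
    · simp [hs]
    · have hks := H.mul_le_card_verts_of_matchCount_ne_zero hH hs
      refine if_neg fun h => hsr (Nat.eq_of_mul_eq_mul_left hk ?_)
      omega
  · exact fun h => absurd (Finset.mem_range.mpr (by omega)) h

theorem exists_matchCount_ne_zero_of_coeff_ne_zero {k i : ℕ}
    (hi : (H.matchingPoly k).coeff i ≠ 0) :
    ∃ r, H.matchCount r ≠ 0 ∧ i = H.verts.card - k * r := by
  rw [coeff_matchingPoly] at hi
  obtain ⟨r, -, hr⟩ := Finset.exists_ne_zero_of_sum_ne_zero hi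
  by_cases hir : i = H.verts.card - k * r
  · rw [if_pos hir] at hr
    exact ⟨r, fun h => hr (by simp [h]), hir⟩
  · exact absurd (if_neg hir) hr

theorem aeval_mul_matchingPoly {A : Type*} [CommSemiring A] [Algebra ℝ A] {k : ℕ}
    (hH : H.IsUniform k) {ζ : A} (hζ : ζ ^ k = 1) (w : A) :
    aeval (ζ * w) (H.matchingPoly k) = ζ ^ H.verts.card * aeval w (H.matchingPoly k) := by
  refine aeval_mul_eq_pow_mul_aeval (fun i hi => ?_) w
  obtain ⟨r, hr, rfl⟩ :=
    H.exists_matchCount_ne_zero_of_coeff_ne_zero (Polynomial.mem_support_iff.mp hi)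
  conv_rhs => rw [← Nat.sub_add_cancel (H.mul_le_card_verts_of_matchCount_ne_zero hH hr)]
  rw [pow_add, pow_mul, hζ, one_pow, mul_one]

theorem exists_aeval_matchingPoly_eq_zero_ne_zero {k : ℕ} (hH : H.IsUniform k) (hk : 0 < k)
    (hedges : H.edges.Nonempty) :
    ∃ z : ℂ, aeval z (H.matchingPoly k) = 0 ∧ z ≠ 0 := by
  obtain ⟨e, he⟩ := hedges
  have hkn : k * 1 ≤ H.verts.card := by
    rw [mul_one, ← hH e he]
    exact Finset.card_le_card (H.edge_sub e he)
  have hcoeff₀ : (H.matchingPoly k).coeff (H.verts.card - k * 0) ≠ 0 := by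
    rw [H.coeff_matchingPoly_card_sub_mul hH hk (Nat.zero_le _) (Nat.zero_le _),
      H.matchCount_zero_s19]
    norm_num
  have hcoeff₁ : (H.matchingPoly k).coeff (H.verts.card - k * 1) ≠ 0 := by
    rw [H.coeff_matchingPoly_card_sub_mul hH hk (Finset.card_pos.mpr ⟨e, he⟩) hkn]
    simpa using H.matchCount_one_ne_zero ⟨e, he⟩
  obtain ⟨z, hz, hz0⟩ :=
    exists_isRoot_ne_zero_of_coeff_ne_zero (p := (H.matchingPoly k).map (algebraMap ℝ ℂ))
    (by omega : H.verts.card - k * 0 ≠ H.verts.card - k * 1)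
    (by rwa [coeff_map, _root_.map_ne_zero]) (by rwa [coeff_map, _root_.map_ne_zero])
  exact ⟨z, by rwa [IsRoot, eval_map_algebraMap] at hz, hz0⟩

end FinHypergraph

theorem exists_nonreal_zero_general {α : Type*} [DecidableEq α]
    (H : FinHypergraph α) (k Δ : ℕ) (hk : 3 ≤ k) (hH : H.IsUniform k)
    (hΔ : H.maxDegree Δ) (hΔ2 : 2 ≤ Δ) :
    ∃ z : ℂ, (Polynomial.aeval z) (H.matchingPoly k) = 0 ∧ z.im ≠ 0 := by
  obtain ⟨-, v, -, hv⟩ := hΔ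
  obtain ⟨z, hz, hz0⟩ := H.exists_aeval_matchingPoly_eq_zero_ne_zero hH (by omega)
    (H.edges_nonempty_of_degree_ne_zero (v := v) (by omega))
  obtain ⟨ζ, hζk, hζ⟩ := Complex.exists_pow_eq_one_im_ne_zero hk
  rcases Complex.im_ne_zero_or_mul_im_ne_zero hζ hz0 with him | him
  · exact ⟨z, hz, him⟩
  · exact ⟨ζ * z, by rw [H.aeval_mul_matchingPoly hH hζk, hz, mul_zero], him⟩

/-- For a connected `k`-graph with maximum degree `Δ ≥ 2` and `k ≥ 3`, the matching
polynomial has at least one nonreal complex zero. -/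
theorem exists_nonreal_zero {α : Type*} [DecidableEq α]
    (H : FinHypergraph α) (k Δ : ℕ) (hk : 3 ≤ k) (hH : H.IsUniform k)
    (hconn : H.Connected) (hΔ : H.maxDegree Δ) (hΔ2 : 2 ≤ Δ) :
    ∃ z : ℂ, (Polynomial.aeval z) (H.matchingPoly k) = 0 ∧ z.im ≠ 0 :=
  exists_nonreal_zero_general H k Δ hk hH hΔ hΔ2
end
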